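/- arXiv:1104.2459 — 3 statements merged into one kernel-verified Lean document; each statement's English description precedes it below -/
import Mathlib

section
/- Let A be a (not necessarily unital) algebra with a coassociative linear map Δ : A → A ⊗ A, and let T_β, T_γ : A → A be linear maps satisfying: (1) T_β ∘ T_γ = T_γ ∘ T_β, (2) Δ ∘ T_β = (id ⊗ T_β) ∘ Δ and Δ ∘ T_γ = (T_γ ⊗ id) ∘ Δ, and (3) (id ⊗ T_γ) ∘ Δ = (T_β ⊗ id) ∘ Δ. Define Δ♮ := (id ⊗ T_γ) ∘ Δ. Then Δ♮ is coassociative, i.e. (id ⊗ Δ♮) ∘ Δ♮ = (Δ♮ ⊗ id) ∘ Δ♮. -/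
open TensorProduct

/-- If `Δ` is coassociative and `T_β`, `T_γ` satisfy the listed compatibility
conditions, then `Δ♮ := (id ⊗ T_γ) ∘ Δ` is coassociative. -/
theorem stmt0 {k A : Type*} [Field k] [AddCommGroup A] [Module k A]
    (Δ : A →ₗ[k] A ⊗[k] A) (Tβ Tγ : A →ₗ[k] A)
    (hΔ : (TensorProduct.assoc k A A A).toLinearMap ∘ₗ
          (TensorProduct.map Δ (LinearMap.id : A →ₗ[k] A)) ∘ₗ Δ
        = (TensorProduct.map (LinearMap.id : A →ₗ[k] A) Δ) ∘ₗ Δ)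
    (h1 : Tβ ∘ₗ Tγ = Tγ ∘ₗ Tβ)
    (h2 : Δ ∘ₗ Tβ = (TensorProduct.map (LinearMap.id : A →ₗ[k] A) Tβ) ∘ₗ Δ)
    (h3 : Δ ∘ₗ Tγ = (TensorProduct.map Tγ (LinearMap.id : A →ₗ[k] A)) ∘ₗ Δ)
    (h4 : (TensorProduct.map (LinearMap.id : A →ₗ[k] A) Tγ) ∘ₗ Δ
        = (TensorProduct.map Tβ (LinearMap.id : A →ₗ[k] A)) ∘ₗ Δ) :
    (TensorProduct.assoc k A A A).toLinearMap ∘ₗ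
      (TensorProduct.map ((TensorProduct.map (LinearMap.id : A →ₗ[k] A) Tγ) ∘ₗ Δ)
        (LinearMap.id : A →ₗ[k] A)) ∘ₗ
      ((TensorProduct.map (LinearMap.id : A →ₗ[k] A) Tγ) ∘ₗ Δ)
      = (TensorProduct.map (LinearMap.id : A →ₗ[k] A)
          ((TensorProduct.map (LinearMap.id : A →ₗ[k] A) Tγ) ∘ₗ Δ)) ∘ₗ
        ((TensorProduct.map (LinearMap.id : A →ₗ[k] A) Tγ) ∘ₗ Δ) := by
  have A1 : TensorProduct.map (TensorProduct.map (LinearMap.id : A →ₗ[k] A) Tγ ∘ₗ Δ)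
        (LinearMap.id : A →ₗ[k] A) ∘ₗ TensorProduct.map (LinearMap.id : A →ₗ[k] A) Tγ ∘ₗ Δ
      = TensorProduct.map (TensorProduct.map (LinearMap.id : A →ₗ[k] A) Tγ) Tγ ∘ₗ
        TensorProduct.map Δ (LinearMap.id : A →ₗ[k] A) ∘ₗ Δ := by
    rw [← LinearMap.comp_assoc, ← LinearMap.comp_assoc, ← TensorProduct.map_comp,
      ← TensorProduct.map_comp]
    simp
  have A2 : TensorProduct.map (LinearMap.id : A →ₗ[k] A)
        (TensorProduct.map (LinearMap.id : A →ₗ[k] A) Tγ ∘ₗ Δ) ∘ₗ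
        TensorProduct.map (LinearMap.id : A →ₗ[k] A) Tγ ∘ₗ Δ
      = TensorProduct.map (LinearMap.id : A →ₗ[k] A) (TensorProduct.map Tγ Tγ) ∘ₗ
        TensorProduct.map (LinearMap.id : A →ₗ[k] A) Δ ∘ₗ Δ := by
    rw [← LinearMap.comp_assoc, ← LinearMap.comp_assoc, ← TensorProduct.map_comp,
      ← TensorProduct.map_comp]
    congr 1
    rw [LinearMap.comp_assoc, h3, ← LinearMap.comp_assoc, ← TensorProduct.map_comp,
      LinearMap.id_comp, LinearMap.comp_id, LinearMap.id_comp]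
  have A3 : (TensorProduct.assoc k A A A).toLinearMap ∘ₗ
        TensorProduct.map (TensorProduct.map (LinearMap.id : A →ₗ[k] A) Tγ) Tγ ∘ₗ
        TensorProduct.map Δ (LinearMap.id : A →ₗ[k] A) ∘ₗ Δ
      = TensorProduct.map (LinearMap.id : A →ₗ[k] A) (TensorProduct.map Tγ Tγ) ∘ₗ
        (TensorProduct.assoc k A A A).toLinearMap ∘ₗ
        TensorProduct.map Δ (LinearMap.id : A →ₗ[k] A) ∘ₗ Δ := by
    rw [← LinearMap.comp_assoc _ _
        (TensorProduct.map (LinearMap.id : A →ₗ[k] A) (TensorProduct.map Tγ Tγ)),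
      TensorProduct.map_map_comp_assoc_eq, LinearMap.comp_assoc]
  rw [A1, A3, hΔ, A2]
end

section
/- Let A be a vector space with coassociative Δ : A → A ⊗ A and linear maps T_β, T_γ : A → A satisfying T_γ ∘ T_γ = T_γ, T_β ∘ T_γ = T_γ ∘ T_β, Δ ∘ T_γ = (T_γ ⊗ id) ∘ Δ, Δ ∘ T_β = (id ⊗ T_β) ∘ Δ, and (id ⊗ T_γ) ∘ Δ = (T_β ⊗ id) ∘ Δ. For a functional ω on A define ω̃ := ω ∘ T_γ ∘ T_β, and define Δ♮ := (id ⊗ T_γ) ∘ Δ with convolution ω₁ *♮ ω₂ := (ω₁ ⊗ ω₂) ∘ Δ♮ and ordinary convolution θ₁ * θ₂ := (θ₁ ⊗ θ₂) ∘ Δ. Then for all functionals ω₁, ω₂: (ω₁ *♮ ω₂)~ = ω̃₁ * ω̃₂. -/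
open TensorProduct

/-- The convolution product on the dual space induced by a linear map `Δ : A → A ⊗ A`. -/
noncomputable def convDual {k A : Type*} [Field k] [AddCommGroup A] [Module k A]
    (Δ : A →ₗ[k] A ⊗[k] A) (ω₁ ω₂ : A →ₗ[k] k) : A →ₗ[k] k :=
  (TensorProduct.lid k k).toLinearMap ∘ₗ (TensorProduct.map ω₁ ω₂) ∘ₗ Δ

/-- with `ω̃ := ω ∘ T_γ ∘ T_β` and `Δ♮ := (id ⊗ T_γ) ∘ Δ`, one has
`(ω₁ *♮ ω₂)~ = ω̃₁ * ω̃₂`. -/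
theorem stmt2 {k A : Type*} [Field k] [AddCommGroup A] [Module k A]
    (Δ : A →ₗ[k] A ⊗[k] A) (Tβ Tγ : A →ₗ[k] A)
    (hΔ : (TensorProduct.assoc k A A A).toLinearMap ∘ₗ
          (TensorProduct.map Δ (LinearMap.id : A →ₗ[k] A)) ∘ₗ Δ
        = (TensorProduct.map (LinearMap.id : A →ₗ[k] A) Δ) ∘ₗ Δ)
    (hγγ : Tγ ∘ₗ Tγ = Tγ)
    (h1 : Tβ ∘ₗ Tγ = Tγ ∘ₗ Tβ)
    (h3 : Δ ∘ₗ Tγ = (TensorProduct.map Tγ (LinearMap.id : A →ₗ[k] A)) ∘ₗ Δ)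
    (h2 : Δ ∘ₗ Tβ = (TensorProduct.map (LinearMap.id : A →ₗ[k] A) Tβ) ∘ₗ Δ)
    (h4 : (TensorProduct.map (LinearMap.id : A →ₗ[k] A) Tγ) ∘ₗ Δ
        = (TensorProduct.map Tβ (LinearMap.id : A →ₗ[k] A)) ∘ₗ Δ)
    (ω₁ ω₂ : A →ₗ[k] k) :
    (convDual ((TensorProduct.map (LinearMap.id : A →ₗ[k] A) Tγ) ∘ₗ Δ) ω₁ ω₂) ∘ₗ Tγ ∘ₗ Tβ
      = convDual Δ (ω₁ ∘ₗ Tγ ∘ₗ Tβ) (ω₂ ∘ₗ Tγ ∘ₗ Tβ) := by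
  have hc : Δ ∘ₗ (Tγ ∘ₗ Tβ) = TensorProduct.map Tγ Tβ ∘ₗ Δ := by
    calc Δ ∘ₗ (Tγ ∘ₗ Tβ) = (Δ ∘ₗ Tγ) ∘ₗ Tβ := by rw [LinearMap.comp_assoc]
    _ = TensorProduct.map Tγ LinearMap.id ∘ₗ (Δ ∘ₗ Tβ) := by
        rw [h3, LinearMap.comp_assoc]
    _ = (TensorProduct.map Tγ LinearMap.id ∘ₗ
          TensorProduct.map LinearMap.id Tβ) ∘ₗ Δ := by
        rw [h2, LinearMap.comp_assoc]
    _ = TensorProduct.map Tγ Tβ ∘ₗ Δ := by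
        rw [← TensorProduct.map_comp, LinearMap.comp_id, LinearMap.id_comp]
  have key : TensorProduct.map (LinearMap.id : A →ₗ[k] A) Tγ ∘ₗ Δ ∘ₗ (Tγ ∘ₗ Tβ)
      = TensorProduct.map (Tγ ∘ₗ Tβ) (Tγ ∘ₗ Tβ) ∘ₗ Δ := by
    rw [hc, ← LinearMap.comp_assoc, ← TensorProduct.map_comp, LinearMap.id_comp]
    have e1 : TensorProduct.map (Tγ ∘ₗ Tβ) (Tγ ∘ₗ Tβ)
        = TensorProduct.map Tγ (Tγ ∘ₗ Tβ) ∘ₗ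
            TensorProduct.map Tβ (LinearMap.id : A →ₗ[k] A) := by
      rw [← TensorProduct.map_comp, LinearMap.comp_id]
    have e2 : (Tγ ∘ₗ Tβ) ∘ₗ Tγ = Tγ ∘ₗ Tβ := by
      rw [LinearMap.comp_assoc, h1, ← LinearMap.comp_assoc, hγγ]
    rw [e1, LinearMap.comp_assoc, ← h4, ← LinearMap.comp_assoc,
      ← TensorProduct.map_comp, e2, LinearMap.comp_id]
  unfold convDual
  rw [TensorProduct.map_comp (f₂ := ω₁) (f₁ := Tγ ∘ₗ Tβ) (g₂ := ω₂) (g₁ := Tγ ∘ₗ Tβ)]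
  simp only [LinearMap.comp_assoc]
  rw [key]
end

section
/- Let G be a locally compact group, K a compact subgroup, and π a unitary representation of G on a Hilbert space H. Suppose π admits a K-invariant vector v that is cyclic for π, and suppose dim H^K = 1. Then π is irreducible. -/
/-- The closed subspace of `K`-fixed vectors of a unitary representation `π`. -/
def invariantVectors {G : Type*} [Group G] {H : Type*} [NormedAddCommGroup H]
    [InnerProductSpace ℂ H] [CompleteSpace H]
    (π : G →* unitary (H →L[ℂ] H)) (K : Subgroup G) : Submodule ℂ H where
  carrier := {v | ∀ k ∈ K, (π k : H →L[ℂ] H) v = v}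
  add_mem' := by
    intro a b ha hb k hk
    simp [map_add, ha k hk, hb k hk]
  zero_mem' := by
    intro k hk
    simp
  smul_mem' := by
    intro c v hv k hk
    simp [map_smul, hv k hk]

/-!
Since `π` is unitary, the orthogonal complement of a closed invariant subspace `V` is again
invariant, so the orthogonal projection onto `V` commutes with `π`. Hence the `K`-fixed vector `v`
splits as `v₁ + v₂` with `v₁ ∈ V` and `v₂ ∈ Vᗮ` both `K`-fixed. Two orthogonal vectors of the
one-dimensional space `H^K` cannot both be nonzero, so `v` lies in `V` or in `Vᗮ`, and cyclicity of
`v` forces that subspace to be everything.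
-/

open scoped InnerProductSpace

theorem eq_zero_or_eq_zero_of_inner_eq_zero {𝕜 E : Type*} [RCLike 𝕜] [NormedAddCommGroup E]
    [InnerProductSpace 𝕜 E] {W : Submodule 𝕜 E} (hW : Module.rank 𝕜 W ≤ 1) {x y : E}
    (hx : x ∈ W) (hy : y ∈ W) (hxy : ⟪x, y⟫_𝕜 = 0) : x = 0 ∨ y = 0 := by
  obtain ⟨u, hu⟩ := rank_le_one_iff.mp hW
  obtain ⟨a, rfl⟩ : ∃ a : 𝕜, a • (u : E) = x := (hu ⟨x, hx⟩).imp fun _ h ↦ congrArg Subtype.val h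
  obtain ⟨b, rfl⟩ : ∃ b : 𝕜, b • (u : E) = y := (hu ⟨y, hy⟩).imp fun _ h ↦ congrArg Subtype.val h
  simp only [inner_smul_left, inner_smul_right, mul_eq_zero, map_eq_zero, inner_self_eq_zero,
    ZeroMemClass.coe_eq_zero] at hxy
  rcases hxy with ha | hb | hu <;> simp [*]

section Representation

variable {G H : Type*} [Group G] [NormedAddCommGroup H] [InnerProductSpace ℂ H] [CompleteSpace H]
  {π : G →* unitary (H →L[ℂ] H)}

theorem apply_mem_orthogonal {V : Submodule ℂ H} (hV : ∀ g : G, ∀ w ∈ V, (π g : H →L[ℂ] H) w ∈ V)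
    (g : G) {w : H} (hw : w ∈ Vᗮ) : (π g : H →L[ℂ] H) w ∈ Vᗮ := by
  rw [Submodule.mem_orthogonal]
  intro x hx
  have hx' : (π g : H →L[ℂ] H) ((π g⁻¹ : H →L[ℂ] H) x) = x := by
    rw [map_inv]
    exact congr($(Unitary.coe_mul_star_self (π g)) x)
  rw [← hx', Unitary.inner_map_map]
  exact hw _ (hV g⁻¹ x hx)

theorem starProjection_apply_comm {V : Submodule ℂ H} [V.HasOrthogonalProjection]
    (hV : ∀ g : G, ∀ w ∈ V, (π g : H →L[ℂ] H) w ∈ V) (g : G) (x : H) :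
    V.starProjection ((π g : H →L[ℂ] H) x) = (π g : H →L[ℂ] H) (V.starProjection x) := by
  refine Submodule.eq_starProjection_of_mem_orthogonal (hV g _ (V.starProjection_apply_mem x)) ?_
  rw [← map_sub]
  exact apply_mem_orthogonal hV g (V.sub_starProjection_mem_orthogonal x)

theorem starProjection_mem_invariantVectors {K : Subgroup G}
    {V : Submodule ℂ H} [V.HasOrthogonalProjection]
    (hV : ∀ g : G, ∀ w ∈ V, (π g : H →L[ℂ] H) w ∈ V) {v : H} (hv : v ∈ invariantVectors π K) :
    V.starProjection v ∈ invariantVectors π K := fun k hk ↦ by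
  rw [← starProjection_apply_comm hV, hv k hk]

theorem eq_top_of_cyclic_mem {v : H}
    (hcyc : (Submodule.span ℂ (Set.range fun g : G => (π g : H →L[ℂ] H) v)).topologicalClosure
      = ⊤)
    {W : Submodule ℂ H} (hWc : IsClosed (W : Set H))
    (hW : ∀ g : G, ∀ w ∈ W, (π g : H →L[ℂ] H) w ∈ W) (hvW : v ∈ W) : W = ⊤ := by
  refine top_unique (hcyc ▸ Submodule.topologicalClosure_minimal _ ?_ hWc)
  rw [Submodule.span_le]
  rintro _ ⟨g, rfl⟩
  exact hW g v hvW

end Representation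

theorem stmt6_general {G : Type*} [Group G]
    (K : Subgroup G)
    {H : Type*} [NormedAddCommGroup H] [InnerProductSpace ℂ H] [CompleteSpace H]
    (π : G →* unitary (H →L[ℂ] H))
    (v : H) (hv : v ∈ invariantVectors π K)
    (hcyc : (Submodule.span ℂ (Set.range fun g : G => (π g : H →L[ℂ] H) v)).topologicalClosure
      = ⊤)
    (hdim : Module.rank ℂ (invariantVectors π K) = 1) :
    ∀ V : Submodule ℂ H, IsClosed (V : Set H) →
      (∀ g : G, ∀ w ∈ V, (π g : H →L[ℂ] H) w ∈ V) → V = ⊥ ∨ V = ⊤ := by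
  intro V hVc hV
  have : CompleteSpace V := hVc.completeSpace_coe
  have hv₁ := starProjection_mem_invariantVectors hV hv
  have hv₂ : v - V.starProjection v ∈ invariantVectors π K := sub_mem hv hv₁
  have horth : ⟪V.starProjection v, v - V.starProjection v⟫_ℂ = 0 :=
    (Submodule.mem_orthogonal V _).mp (V.sub_starProjection_mem_orthogonal v) _
      (V.starProjection_apply_mem v)
  rcases eq_zero_or_eq_zero_of_inner_eq_zero hdim.le hv₁ hv₂ horth with h | h
  · rw [Submodule.starProjection_apply_eq_zero_iff] at h
    exact .inl (V.orthogonal_eq_top_iff.mp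
      (eq_top_of_cyclic_mem hcyc V.isClosed_orthogonal (fun g _ ↦ apply_mem_orthogonal hV g) h))
  · rw [sub_eq_zero, eq_comm, Submodule.starProjection_eq_self_iff] at h
    exact .inr (eq_top_of_cyclic_mem hcyc hVc hV h)

/-- if a (strongly continuous) unitary representation `π` of `G` admits a
cyclic `K`-invariant vector (`K` compact) and the space of `K`-fixed vectors is
one-dimensional, then `π` is irreducible. -/
theorem stmt6 {G : Type*} [Group G] [TopologicalSpace G] [IsTopologicalGroup G]
    (K : Subgroup G) (hK : IsCompact (K : Set G))
    {H : Type*} [NormedAddCommGroup H] [InnerProductSpace ℂ H] [CompleteSpace H]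
    (π : G →* unitary (H →L[ℂ] H))
    (hcont : ∀ v : H, Continuous fun g => (π g : H →L[ℂ] H) v)
    (v : H) (hv : v ∈ invariantVectors π K)
    (hcyc : (Submodule.span ℂ (Set.range fun g : G => (π g : H →L[ℂ] H) v)).topologicalClosure
      = ⊤)
    (hdim : Module.rank ℂ (invariantVectors π K) = 1) :
    ∀ V : Submodule ℂ H, IsClosed (V : Set H) →
      (∀ g : G, ∀ w ∈ V, (π g : H →L[ℂ] H) w ∈ V) → V = ⊥ ∨ V = ⊤ :=
  stmt6_general K π v hv hcyc hdim
end
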